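/- Fix u ≠ v in X and assume the paths are indexed so that d(P_1,{u,v}) ≤ d(P_2,{u,v}) ≤ … ≤ d(P_k,{u,v}), where d(P,{u,v}) = min(min_{p∈P} d(u,p), min_{p∈P} d(v,p)). Then for every s ∈ {1,…,k} and every level i ∈ {0,…,m−1}, the probability over the random choices (σ, α, β) that P_s cuts {u,v} horizontally at level i is at most (1/s)·d(u,v)/2^{i−2}. -/

import Mathlib

open Set

noncomputable section

variable {X : Type} [MetricSpace X] [Fintype X]

/-- `nbr Q δ` is the `δ`-neighborhood `N(Q,δ) = {x : min_{p ∈ Q} d x p ≤ δ}` of `Q`. -/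
def nbr (Q : Set X) (δ : ℝ) : Set X := {x | ∃ p ∈ Q, dist x p ≤ δ}

/-- The horizontal child `A_s = (A ∩ N(P_{σ s}, β·2^{i-2})) \ ⋃_{t<s} A_t` of a cluster `A`
at scale `i` (note `2 ^ i / 4 = 2^{i-2}`, and `⋃_{t<s} A_t = ⋃_{t<s} (A ∩ N(P_{σ t}, β·2^{i-2}))`). -/
def hchild {k : ℕ} (P : Fin k → Set X) (σ : Equiv.Perm (Fin k)) (β : ℝ)
    (A : Set X) (i : ℕ) (s : Fin k) : Set X :=
  (A ∩ nbr (P (σ s)) (β * (2 ^ i / 4))) \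
    ⋃ t, ⋃ (_ : t < s), A ∩ nbr (P (σ t)) (β * (2 ^ i / 4))

/-- The vertical child `A_{s,j}` of a cluster `A` at scale `i`:
the part of the horizontal child `A_s` with `(j-1+α)·2^{i-2} ≤ d r x < (j+α)·2^{i-2}`. -/
def vchild {k : ℕ} (r : X) (P : Fin k → Set X) (σ : Equiv.Perm (Fin k)) (α β : ℝ)
    (A : Set X) (i : ℕ) (s : Fin k) (j : ℕ) : Set X :=
  {x ∈ hchild P σ β A i s |
    ((j : ℝ) - 1 + α) * (2 ^ i / 4) ≤ dist r x ∧ dist r x < ((j : ℝ) + α) * (2 ^ i / 4)}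

/-- Clusters of the alternating partitions together with (the indices of) their trunks,
defined top-down: `partsTAux … n` is the partition `C (m - n)`.  At the top
`C m = {univ}` with trunk `P (σ 0)`; the clusters of `C i` are the nonempty vertical
children `A_{s,j}` (with trunk `P (σ s)`) of clusters `A ∈ C (i+1)`. -/
def partsTAux {k : ℕ} (hk : 0 < k) (r : X) (P : Fin k → Set X) (σ : Equiv.Perm (Fin k))
    (α β : ℝ) (m : ℕ) : ℕ → Set (Set X × Fin k)
  | 0 => {(Set.univ, σ ⟨0, hk⟩)}
  | n + 1 =>
      {Bl | Bl.1.Nonempty ∧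
        ∃ A : Set X, (∃ l, (A, l) ∈ partsTAux hk r P σ α β m n) ∧
          ∃ s : Fin k, ∃ j : ℕ,
            Bl.1 = vchild r P σ α β A (m - (n + 1)) s j ∧ Bl.2 = σ s}

/-- The alternating partition `C i` with trunk indices: `(A, l) ∈ partsT hk r P σ α β m i`
means that `A` is a cluster of `C i` whose trunk is the path `P l`. -/
def partsT {k : ℕ} (hk : 0 < k) (r : X) (P : Fin k → Set X) (σ : Equiv.Perm (Fin k))
    (α β : ℝ) (m i : ℕ) : Set (Set X × Fin k) :=
  partsTAux hk r P σ α β m (m - i)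

/-- The alternating partition `C i`. -/
def parts {k : ℕ} (hk : 0 < k) (r : X) (P : Fin k → Set X) (σ : Equiv.Perm (Fin k))
    (α β : ℝ) (m i : ℕ) : Set (Set X) :=
  {A | ∃ l, (A, l) ∈ partsT hk r P σ α β m i}

/-- `TrunkOf … i x l`: the path `P l` is the trunk of the cluster `C i (x)` of `C i`
containing `x`. -/
def TrunkOf {k : ℕ} (hk : 0 < k) (r : X) (P : Fin k → Set X) (σ : Equiv.Perm (Fin k))
    (α β : ℝ) (m i : ℕ) (x : X) (l : Fin k) : Prop :=
  ∃ A : Set X, (A, l) ∈ partsT hk r P σ α β m i ∧ x ∈ A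

/-- `u` and `v` lie in the same cluster of `C i`. -/
def SameCluster {k : ℕ} (hk : 0 < k) (r : X) (P : Fin k → Set X) (σ : Equiv.Perm (Fin k))
    (α β : ℝ) (m i : ℕ) (u v : X) : Prop :=
  ∃ A ∈ parts hk r P σ α β m i, u ∈ A ∧ v ∈ A

/-- `P s` settles `{u,v}` at level `i`: `u` and `v` are in the same cluster of `C (i+1)`,
and `P s` is the first path in the order `σ 0, σ 1, …` that is the trunk of at least one
of `C i (u)`, `C i (v)`. -/
def Settles {k : ℕ} (hk : 0 < k) (r : X) (P : Fin k → Set X) (σ : Equiv.Perm (Fin k))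
    (α β : ℝ) (m : ℕ) (s : Fin k) (i : ℕ) (u v : X) : Prop :=
  SameCluster hk r P σ α β m (i + 1) u v ∧
    ∃ s' : Fin k, σ s' = s ∧
      (TrunkOf hk r P σ α β m i u (σ s') ∨ TrunkOf hk r P σ α β m i v (σ s')) ∧
      ∀ t' : Fin k, t' < s' →
        ¬(TrunkOf hk r P σ α β m i u (σ t') ∨ TrunkOf hk r P σ α β m i v (σ t'))

/-- `P s` cuts `{u,v}` horizontally at level `i`: it settles `{u,v}` at level `i` and is
the trunk of exactly one of `C i (u)`, `C i (v)`. -/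
def CutsH {k : ℕ} (hk : 0 < k) (r : X) (P : Fin k → Set X) (σ : Equiv.Perm (Fin k))
    (α β : ℝ) (m : ℕ) (s : Fin k) (i : ℕ) (u v : X) : Prop :=
  Settles hk r P σ α β m s i u v ∧
    Xor' (TrunkOf hk r P σ α β m i u s) (TrunkOf hk r P σ α β m i v s)

/-- `P s` cuts `{u,v}` vertically at level `i`: `u` and `v` lie in the same cluster `A`
of `C (i+1)` and in the same horizontal child of `A`, whose trunk is `P s`, and
`C i (u) ≠ C i (v)`. -/
def CutsV {k : ℕ} (hk : 0 < k) (r : X) (P : Fin k → Set X) (σ : Equiv.Perm (Fin k))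
    (α β : ℝ) (m : ℕ) (s : Fin k) (i : ℕ) (u v : X) : Prop :=
  (∃ A ∈ parts hk r P σ α β m (i + 1), u ∈ A ∧ v ∈ A ∧
      ∃ s' : Fin k, σ s' = s ∧ u ∈ hchild P σ β A i s' ∧ v ∈ hchild P σ β A i s') ∧
    ¬SameCluster hk r P σ α β m i u v

open MeasureTheory in
/-- The probability, over a uniformly random permutation `σ` of `{1,…,k}`, a uniform
`α ∈ [0,1)` and a uniform `β ∈ [1,2)` (independent), that `P s` cuts `{u,v}` horizontally
at level `i` (note both `[0,1)` and `[1,2)` have Lebesgue measure `1`). -/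
def PrCutH {k : ℕ} (hk : 0 < k) (r : X) (P : Fin k → Set X) (m : ℕ)
    (s : Fin k) (i : ℕ) (u v : X) : ℝ :=
  (∑ σ : Equiv.Perm (Fin k),
      (volume {p : ℝ × ℝ | p.1 ∈ Set.Ico (0 : ℝ) 1 ∧ p.2 ∈ Set.Ico (1 : ℝ) 2 ∧
        CutsH hk r P σ p.1 p.2 m s i u v}).toReal) /
    (Fintype.card (Equiv.Perm (Fin k)))

open MeasureTheory in
/-- The probability, over a uniformly random permutation `σ` of `{1,…,k}`, a uniform
`α ∈ [0,1)` and a uniform `β ∈ [1,2)` (independent), that `P s` cuts `{u,v}` vertically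
at level `i`. -/
def PrCutV {k : ℕ} (hk : 0 < k) (r : X) (P : Fin k → Set X) (m : ℕ)
    (s : Fin k) (i : ℕ) (u v : X) : ℝ :=
  (∑ σ : Equiv.Perm (Fin k),
      (volume {p : ℝ × ℝ | p.1 ∈ Set.Ico (0 : ℝ) 1 ∧ p.2 ∈ Set.Ico (1 : ℝ) 2 ∧
        CutsV hk r P σ p.1 p.2 m s i u v}).toReal) /
    (Fintype.card (Equiv.Perm (Fin k)))

end

/-! If `P s` cuts `{u,v}` horizontally at level `i`, two things happen. First, exactly one of
`u`, `v` lies in `N(P s, β·2^{i-2})`, which confines `β` to an interval of length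
`|d(u, P s) - d(v, P s)| / 2^{i-2} ≤ d(u,v) / 2^{i-2}`. Second, `σ` lists `P s` before all of
`P 0, …, P (s-1)`: a path `P t` with `t < s` listed earlier is at least as close to `{u,v}`,
so one of `u`, `v` would already be in its neighbourhood and `P t` would settle the pair
instead. The second event has probability `1/(s+1)` over `σ`, independently of `β`. -/

open MeasureTheory Metric Equiv
open scoped Finset

theorem Set.Finite.csInf_image_le_iff {ι β : Type*} [ConditionallyCompleteLinearOrder β]
    {f : ι → β} {Q : Set ι} (hQ : Q.Finite) (hne : Q.Nonempty) {a : β} :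
    sInf (f '' Q) ≤ a ↔ ∃ p ∈ Q, f p ≤ a := by
  rw [← not_lt, (hQ.image f).lt_csInf_iff (hne.image f)]
  simp

theorem exists_nat_mem_shifted_Ico {α c D : ℝ} (hc : 0 < c) (hα : α ≤ 1) (hD : 0 ≤ D) :
    ∃ j : ℕ, D ∈ Ico (((j : ℝ) - 1 + α) * c) (((j : ℝ) + α) * c) := by
  have hy : 0 ≤ D / c + 1 - α := by have := div_nonneg hD hc.le; linarith
  refine ⟨⌊D / c + 1 - α⌋₊, ?_, ?_⟩
  · have := Nat.floor_le hy
    rw [← le_div_iff₀ hc]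
    linarith
  · have := Nat.lt_floor_add_one (D / c + 1 - α)
    rw [← div_lt_iff₀ hc]
    linarith

theorem volume_toReal_le_of_subset_Ico_prod {S : Set (ℝ × ℝ)} {a b : ℝ} (hab : a ≤ b)
    (hS : S ⊆ Ico 0 1 ×ˢ Ico a b) : (volume S).toReal ≤ b - a := by
  have hbox : volume (Ico (0 : ℝ) 1 ×ˢ Ico a b) = ENNReal.ofReal (b - a) := by
    rw [Measure.volume_eq_prod, Measure.prod_prod, Real.volume_Ico, Real.volume_Ico]
    simp
  calc (volume S).toReal ≤ (volume (Ico (0 : ℝ) 1 ×ˢ Ico a b)).toReal :=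
        ENNReal.toReal_mono (by simp [hbox]) (measure_mono hS)
    _ = b - a := by rw [hbox, ENNReal.toReal_ofReal (sub_nonneg.2 hab)]

theorem swap_mul_mem_filter_first {α : Type*} [LinearOrder α] {S : Finset α} {a b : α}
    (hb : b ∈ S) {σ : Perm α} (hσ : ∀ c ∈ S, c ≠ a → σ.symm a < σ.symm c) :
    ∀ c ∈ S, c ≠ b → (swap a b * σ).symm b < (swap a b * σ).symm c := by
  intro c hc hcb
  change σ.symm (swap a b b) < σ.symm (swap a b c)
  rw [swap_apply_right]
  rcases eq_or_ne c a with rfl | hca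
  · rw [swap_apply_left]
    exact hσ b hb hcb.symm
  · rw [swap_apply_of_ne_of_ne hca hcb]
    exact hσ c hc hca

section FirstAmong

variable {α : Type*} [Fintype α] [LinearOrder α]

theorem card_perm_filter_first_eq {S : Finset α} {a b : α} (ha : a ∈ S) (hb : b ∈ S) :
    #{σ : Perm α | ∀ c ∈ S, c ≠ a → σ.symm a < σ.symm c} =
      #{σ : Perm α | ∀ c ∈ S, c ≠ b → σ.symm b < σ.symm c} := by
  refine Finset.card_equiv (Equiv.mulLeft (swap a b)) fun σ => ?_
  simp only [Finset.mem_filter, Finset.mem_univ, true_and, coe_mulLeft]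
  refine ⟨swap_mul_mem_filter_first hb, fun h => ?_⟩
  have := swap_mul_mem_filter_first ha h
  rwa [← mul_assoc, swap_comm, swap_mul_self, one_mul] at this

theorem card_perm_filter_first_mul_card (S : Finset α) {a : α} (ha : a ∈ S) :
    #{σ : Perm α | ∀ c ∈ S, c ≠ a → σ.symm a < σ.symm c} * #S =
      Fintype.card (Perm α) := by
  set F : α → Finset (Perm α) := fun b => {σ | ∀ c ∈ S, c ≠ b → σ.symm b < σ.symm c}
  have hcover : S.biUnion F = Finset.univ := by
    refine Finset.eq_univ_of_forall fun σ => Finset.mem_biUnion.2 ?_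
    obtain ⟨b, hb, hmin⟩ := S.exists_min_image σ.symm ⟨a, ha⟩
    refine ⟨b, hb, Finset.mem_filter.2 ⟨Finset.mem_univ _, fun c hc hcb => ?_⟩⟩
    exact (hmin c hc).lt_of_ne (σ.symm.injective.ne hcb.symm)
  have hdisj : (S : Set α).PairwiseDisjoint F := by
    intro b _ c hc hbc
    refine Finset.disjoint_left.2 fun σ hσb hσc => ?_
    simp only [F, Finset.mem_filter, Finset.mem_univ, true_and] at hσb hσc
    exact lt_asymm (hσb c hc hbc.symm) (hσc b ‹_› hbc)
  rw [mul_comm, ← Finset.sum_const_nat fun b hb => card_perm_filter_first_eq hb ha,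
    ← Finset.card_biUnion hdisj, hcover, Finset.card_univ]

end FirstAmong

theorem Fin.card_perm_filter_symm_lt_mul {k : ℕ} (s : Fin k) :
    #{σ : Perm (Fin k) | ∀ t < s, σ.symm s < σ.symm t} * ((s : ℕ) + 1) =
      Fintype.card (Perm (Fin k)) := by
  rw [← card_perm_filter_first_mul_card (Finset.Iic s) (Finset.mem_Iic.2 le_rfl), Fin.card_Iic]
  congr 3
  ext σ
  simp [lt_iff_le_and_ne]

section AlternatingPartitions

variable {X : Type} [MetricSpace X] {k : ℕ} {hk : 0 < k} {r : X} {P : Fin k → Set X}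
  {σ : Perm (Fin k)} {α β : ℝ} {m i : ℕ}

theorem mem_nbr_iff_infDist_le {Q : Set X} (hQ : Q.Finite) (hne : Q.Nonempty) {x : X}
    {δ : ℝ} : x ∈ nbr Q δ ↔ infDist x Q ≤ δ := by
  refine ⟨fun ⟨p, hp, h⟩ => (infDist_le_dist_of_mem hp).trans h, fun h => ?_⟩
  obtain ⟨p, hp, hd⟩ := hQ.isCompact.exists_infDist_eq_dist hne x
  exact ⟨p, hp, hd ▸ h⟩

theorem mem_nbr_or_mem_nbr_iff {Q : Set X} (hQ : Q.Finite) (hne : Q.Nonempty) {u v : X}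
    {δ : ℝ} : u ∈ nbr Q δ ∨ v ∈ nbr Q δ ↔
      sInf ((fun p => min (dist u p) (dist v p)) '' Q) ≤ δ := by
  rw [hQ.csInf_image_le_iff hne]
  simp only [nbr, mem_ofPred_eq, min_le_iff]
  grind

theorem mem_hchild_iff {A : Set X} {s : Fin k} {x : X} :
    x ∈ hchild P σ β A i s ↔ x ∈ A ∧ x ∈ nbr (P (σ s)) (β * (2 ^ i / 4)) ∧
      ∀ t < s, x ∉ nbr (P (σ t)) (β * (2 ^ i / 4)) := by
  simp only [hchild, mem_sdiff, mem_inter_iff, mem_iUnion, not_exists, not_and]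
  tauto

theorem exists_le_mem_hchild {A : Set X} {w : Fin k} {x : X} (hxA : x ∈ A)
    (hx : x ∈ nbr (P (σ w)) (β * (2 ^ i / 4))) : ∃ t ≤ w, x ∈ hchild P σ β A i t := by
  obtain ⟨t, ht, hmin⟩ :=
    wellFounded_lt.has_min {t | x ∈ nbr (P (σ t)) (β * (2 ^ i / 4))} ⟨w, hx⟩
  exact ⟨t, not_lt.1 (hmin w hx),
    mem_hchild_iff.2 ⟨hxA, ht, fun t' ht' hx' => hmin t' hx' ht'⟩⟩

theorem mem_partsT_iff (hi : i < m) {B : Set X} {l : Fin k} :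
    (B, l) ∈ partsT hk r P σ α β m i ↔ B.Nonempty ∧
      ∃ A, (∃ l₀, (A, l₀) ∈ partsT hk r P σ α β m (i + 1)) ∧
        ∃ s j, B = vchild r P σ α β A i s j ∧ l = σ s := by
  obtain ⟨n, hn⟩ : ∃ n, m - i = n + 1 := ⟨m - (i + 1), by omega⟩
  have hn' : m - (i + 1) = n := by omega
  have hi' : m - (n + 1) = i := by omega
  rw [partsT, hn, partsTAux, partsT, hn', hi']
  rfl

theorem trunkOf_iff (hi : i < m) (hα : α ≤ 1) {x : X} {l : Fin k} :
    TrunkOf hk r P σ α β m i x l ↔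
      ∃ A, (∃ l₀, (A, l₀) ∈ partsT hk r P σ α β m (i + 1)) ∧
        ∃ s, σ s = l ∧ x ∈ hchild P σ β A i s := by
  constructor
  · rintro ⟨B, hB, hxB⟩
    obtain ⟨-, A, hA, s, j, rfl, rfl⟩ := (mem_partsT_iff hi).1 hB
    exact ⟨A, hA, s, rfl, hxB.1⟩
  · rintro ⟨A, hA, s, rfl, hx⟩
    obtain ⟨j, hj⟩ := exists_nat_mem_shifted_Ico (by positivity : (0 : ℝ) < 2 ^ i / 4) hα
      (dist_nonneg (x := r) (y := x))
    exact ⟨vchild r P σ α β A i s j,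
      (mem_partsT_iff hi).2 ⟨⟨x, hx, hj⟩, A, hA, s, j, rfl, rfl⟩, hx, hj⟩

variable {A : Set X} {l₀ s : Fin k} {x : X}

theorem notMem_nbr_of_forall_lt_not_trunkOf (hi : i < m) (hα : α ≤ 1)
    (hA : (A, l₀) ∈ partsT hk r P σ α β m (i + 1)) (hxA : x ∈ A)
    (hfirst : ∀ t < s, ¬TrunkOf hk r P σ α β m i x (σ t)) {t : Fin k} (ht : t < s) :
    x ∉ nbr (P (σ t)) (β * (2 ^ i / 4)) := fun hx => by
  obtain ⟨t', ht', hx'⟩ := exists_le_mem_hchild hxA hx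
  exact hfirst t' (ht'.trans_lt ht) ((trunkOf_iff hi hα).2 ⟨A, ⟨l₀, hA⟩, t', rfl, hx'⟩)

theorem trunkOf_iff_mem_nbr (hi : i < m) (hα : α ≤ 1)
    (hA : (A, l₀) ∈ partsT hk r P σ α β m (i + 1)) (hxA : x ∈ A)
    (hfirst : ∀ t < s, ¬TrunkOf hk r P σ α β m i x (σ t)) :
    TrunkOf hk r P σ α β m i x (σ s) ↔ x ∈ nbr (P (σ s)) (β * (2 ^ i / 4)) := by
  refine ⟨fun h => ?_, fun hx => (trunkOf_iff hi hα).2 ⟨A, ⟨l₀, hA⟩, s, rfl,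
    mem_hchild_iff.2 ⟨hxA, hx, fun t ht => notMem_nbr_of_forall_lt_not_trunkOf hi hα hA hxA
      hfirst ht⟩⟩⟩
  obtain ⟨_, -, s', hs', hxs'⟩ := (trunkOf_iff hi hα).1 h
  rw [← hs']
  exact (mem_hchild_iff.1 hxs').2.1

variable {u v : X}

theorem CutsH.xor_mem_nbr (hi : i < m) (hα : α ≤ 1) (h : CutsH hk r P σ α β m s i u v) :
    Xor (u ∈ nbr (P s) (β * (2 ^ i / 4))) (v ∈ nbr (P s) (β * (2 ^ i / 4))) := by
  obtain ⟨⟨⟨A, ⟨l₀, hA⟩, huA, hvA⟩, s', rfl, -, hfirst⟩, hxor⟩ := h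
  rwa [← trunkOf_iff_mem_nbr hi hα hA huA fun t ht hu => hfirst t ht (.inl hu),
    ← trunkOf_iff_mem_nbr hi hα hA hvA fun t ht hv => hfirst t ht (.inr hv)]

theorem Settles.symm_lt [Finite X] (hi : i < m) (hα : α ≤ 1) (hP : ∀ t, (P t).Nonempty)
    (hord : ∀ s t : Fin k, s ≤ t →
      sInf ((fun p => min (dist u p) (dist v p)) '' P s) ≤
        sInf ((fun p => min (dist u p) (dist v p)) '' P t))
    (h : Settles hk r P σ α β m s i u v) {t : Fin k} (hts : t < s) : σ.symm s < σ.symm t := by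
  obtain ⟨⟨A, ⟨l₀, hA⟩, huA, hvA⟩, s', rfl, hsettled, hfirst⟩ := h
  rw [symm_apply_apply]
  by_contra! hle
  have hlt : σ.symm t < s' := hle.lt_of_ne fun h => hts.ne (by rw [← h, apply_symm_apply])
  have hfirst_u : ∀ t < s', ¬TrunkOf hk r P σ α β m i u (σ t) := fun t ht hu =>
    hfirst t ht (.inl hu)
  have hfirst_v : ∀ t < s', ¬TrunkOf hk r P σ α β m i v (σ t) := fun t ht hv =>
    hfirst t ht (.inr hv)
  have hu := notMem_nbr_of_forall_lt_not_trunkOf hi hα hA huA hfirst_u hlt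
  have hv := notMem_nbr_of_forall_lt_not_trunkOf hi hα hA hvA hfirst_v hlt
  rw [apply_symm_apply] at hu hv
  have hs_near := hsettled.imp (trunkOf_iff_mem_nbr hi hα hA huA hfirst_u).1
    (trunkOf_iff_mem_nbr hi hα hA hvA hfirst_v).1
  rw [mem_nbr_or_mem_nbr_iff (P _).toFinite (hP _)] at hs_near
  have ht_near : u ∈ nbr (P t) _ ∨ v ∈ nbr (P t) _ :=
    (mem_nbr_or_mem_nbr_iff (P t).toFinite (hP t)).2 ((hord t _ hts.le).trans hs_near)
  exact ht_near.elim hu hv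

theorem volume_cutsH_toReal_le [Finite X] (hi : i < m) (hPs : (P s).Nonempty) :
    (volume {p : ℝ × ℝ | p.1 ∈ Ico (0 : ℝ) 1 ∧ p.2 ∈ Ico (1 : ℝ) 2 ∧
      CutsH hk r P σ p.1 p.2 m s i u v}).toReal ≤ dist u v / (2 ^ i / 4) := by
  set c : ℝ := 2 ^ i / 4
  have hc : 0 < c := by positivity
  set du := infDist u (P s)
  set dv := infDist v (P s)
  have hnbr {x : X} {δ : ℝ} := mem_nbr_iff_infDist_le (P s).toFinite hPs (x := x) (δ := δ)
  calc _ ≤ max du dv / c - min du dv / c := by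
        refine volume_toReal_le_of_subset_Ico_prod (by gcongr; exact min_le_max) ?_
        rintro ⟨a, b⟩ ⟨ha, -, hcut⟩
        have hxor := hcut.xor_mem_nbr hi ha.2.le
        rw [hnbr, hnbr] at hxor
        refine ⟨ha, ?_⟩
        rw [mem_Ico, div_le_iff₀ hc, lt_div_iff₀ hc, min_le_iff, lt_max_iff]
        rcases hxor with ⟨h1, h2⟩ | ⟨h1, h2⟩ <;> grind
    _ = dist du dv / c := by rw [← sub_div, max_sub_min_eq_abs, Real.dist_eq, abs_sub_comm]
    _ ≤ dist u v / c := by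
        gcongr
        simpa using (lipschitz_infDist_pt (P s)).dist_le_mul u v

theorem volume_cutsH_toReal_le_ite [Finite X] (hi : i < m) (hP : ∀ t, (P t).Nonempty)
    (hord : ∀ s t : Fin k, s ≤ t →
      sInf ((fun p => min (dist u p) (dist v p)) '' P s) ≤
        sInf ((fun p => min (dist u p) (dist v p)) '' P t)) :
    (volume {p : ℝ × ℝ | p.1 ∈ Ico (0 : ℝ) 1 ∧ p.2 ∈ Ico (1 : ℝ) 2 ∧
      CutsH hk r P σ p.1 p.2 m s i u v}).toReal ≤
        if ∀ t < s, σ.symm s < σ.symm t then dist u v / (2 ^ i / 4) else 0 := by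
  split_ifs with hσ
  · exact volume_cutsH_toReal_le hi (hP s)
  · refine ((ENNReal.toReal_eq_zero_iff _).2 (.inl ?_)).le
    refine measure_mono_null (fun p hp => ?_) measure_empty
    exact hσ fun t ht => hp.2.2.1.symm_lt hi hp.1.2.le hP hord ht

end AlternatingPartitions

variable {X : Type} [MetricSpace X] [Fintype X]

theorem statement11_general {k : ℕ} (hk : 0 < k) (r : X) (P : Fin k → Set X) (m : ℕ)
    (hr : ∀ s, r ∈ P s)
    (u v : X)
    (hord : ∀ s t : Fin k, s ≤ t →
      sInf ((fun p => min (dist u p) (dist v p)) '' P s) ≤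
        sInf ((fun p => min (dist u p) (dist v p)) '' P t)) :
    ∀ (s : Fin k) (i : ℕ), i < m →
      PrCutH hk r P m s i u v ≤
        (1 / ((s : ℕ) + 1 : ℝ)) * (dist u v / (2 ^ i / 4)) := by
  intro s i hi
  have hcard : (0 : ℝ) < Fintype.card (Perm (Fin k)) := by exact_mod_cast Fintype.card_pos
  rw [PrCutH, div_le_iff₀ hcard]
  calc _ ≤ ∑ σ : Perm (Fin k),
          if ∀ t < s, σ.symm s < σ.symm t then dist u v / (2 ^ i / 4) else 0 :=
        Finset.sum_le_sum fun σ _ => volume_cutsH_toReal_le_ite hi (fun t => ⟨r, hr t⟩) hord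
    _ = #{σ : Perm (Fin k) | ∀ t < s, σ.symm s < σ.symm t} * (dist u v / (2 ^ i / 4)) := by
        rw [Finset.sum_ite, Finset.sum_const_zero, add_zero, Finset.sum_const, nsmul_eq_mul]
    _ = _ := by
        rw [← Fin.card_perm_filter_symm_lt_mul s]
        push_cast
        field_simp

/-- Fix `u ≠ v` and assume the paths are indexed so that
`d(P_1,{u,v}) ≤ … ≤ d(P_k,{u,v})`.  Then for every `s` and every level `i ∈ {0,…,m-1}`,
the probability over `(σ, α, β)` that `P s` cuts `{u,v}` horizontally at level `i` is
at most `(1/s) · d u v / 2^(i-2)` (here the 1-indexed position of `s : Fin k` is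
`s + 1`, and `2 ^ i / 4 = 2^(i-2)`). -/
theorem statement11 {k : ℕ} (hk : 0 < k) (r : X) (P : Fin k → Set X) (m : ℕ)
    (hr : ∀ s, r ∈ P s) (hcov : (⋃ s, P s) = Set.univ)
    (hpath : ∀ s, ∀ x ∈ P s, ∀ y ∈ P s, dist x y = |dist r x - dist r y|)
    (hmin : ∀ x y : X, x ≠ y → 1 ≤ dist x y)
    (hm : (m : ℤ) = 2 + ⌈Real.logb 2 (Metric.diam (Set.univ : Set X))⌉)
    (u v : X) (huv : u ≠ v)
    (hord : ∀ s t : Fin k, s ≤ t →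
      sInf ((fun p => min (dist u p) (dist v p)) '' P s) ≤
        sInf ((fun p => min (dist u p) (dist v p)) '' P t)) :
    ∀ (s : Fin k) (i : ℕ), i < m →
      PrCutH hk r P m s i u v ≤
        (1 / ((s : ℕ) + 1 : ℝ)) * (dist u v / (2 ^ i / 4)) :=
  statement11_general hk r P m hr u v hord
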